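/- The pair (U₁, V₁) satisfies the Weyl commutation relation U₁(θ) ∘ V₁^ℓ = exp(2 i ℓ θ) • (V₁^ℓ ∘ U₁(θ)) for every θ ∈ ℝ and ℓ ∈ ℤ, where V₁ := V² and V₁^ℓ denotes the ℤ-power of the unitary V₁. -/

import Mathlib

open Complex

noncomputable section

/-- The Hilbert space `H := ℓ²(ℤ, ℂ)`. -/
abbrev H : Type := lp (fun _ : ℤ => ℂ) 2

/-- The orthonormal basis vectors `e ℓ = lp.single 2 ℓ 1`. -/
def e (ℓ : ℤ) : H := lp.single 2 ℓ 1

/-- `U₁(θ) := exp(−iθ/2) • (cos(θ/2) • U(θ) + (i·sin(θ/2)) • U(θ+π))`. -/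
def U₁ (U : ℝ → (H →L[ℂ] H)) (θ : ℝ) : H →L[ℂ] H :=
  Complex.exp (-Complex.I * θ / 2) •
    ((Real.cos (θ / 2) : ℂ) • U θ + (Complex.I * Real.sin (θ / 2)) • U (θ + Real.pi))

/-!
`U(θ)` and `U(θ+π)` are diagonal in the basis `e`, with eigenvalues `exp(imθ)` and
`exp(im(θ+π))`, while `V₁^ℓ` shifts the index by `2ℓ`. The shift multiplies both eigenvalue
sequences by the same factor `exp(2iℓθ)` (for `U(θ+π)` the extra factor is `exp(2πiℓ) = 1`),
so each of them satisfies the Weyl relation with that factor, and hence so does their linear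
combination `U₁(θ)`.
-/

lemma ext_e {F : Type*} [AddCommMonoid F] [Module ℂ F] [TopologicalSpace F] [T2Space F]
    {T S : H →L[ℂ] F} (h : ∀ m : ℤ, T (e m) = S (e m)) : T = S :=
  lp.ext_continuousLinearMap (by norm_num) fun m => ContinuousLinearMap.ext_ring (h m)

lemma zpow_apply_e_of_shift {V : unitary (H →L[ℂ] H)}
    (hV : ∀ m : ℤ, (V : H →L[ℂ] H) (e m) = e (m + 1)) (n m : ℤ) :
    ((V ^ n : unitary (H →L[ℂ] H)) : H →L[ℂ] H) (e m) = e (m + n) := by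
  induction n using Int.induction_on generalizing m with
  | zero => simp
  | succ n ih =>
    rw [zpow_add_one, Submonoid.coe_mul, mul_apply_eq_comp, hV, ih]
    congr 1; ring
  | pred n ih =>
    -- `V^(-n-1) e_m = V^(-n) e_(m-1)`, so no inverse of `V` is needed
    have h := ih (m - 1)
    rw [← sub_add_cancel (-(n : ℤ)) 1, zpow_add_one, Submonoid.coe_mul,
      mul_apply_eq_comp, hV, sub_add_cancel] at h
    rw [h]
    congr 1; ring

lemma diagonal_comp_shift_eq_smul {D S : H →L[ℂ] H} {d : ℤ → ℂ} {k : ℤ} {c : ℂ}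
    (hD : ∀ m, D (e m) = d m • e m) (hS : ∀ m, S (e m) = e (m + k))
    (hd : ∀ m, d (m + k) = c * d m) :
    D ∘L S = c • (S ∘L D) :=
  ext_e fun m => by simp [hD, hS, hd, smul_smul]

lemma diagonal_exp_comp_shift_eq_smul {U : ℝ → (H →L[ℂ] H)}
    (hU : ∀ (θ : ℝ) (m : ℤ), U θ (e m) = Complex.exp (Complex.I * m * θ) • e m)
    {S : H →L[ℂ] H} {k : ℤ} (hS : ∀ m, S (e m) = e (m + k)) (θ : ℝ) :
    U θ ∘L S = Complex.exp (Complex.I * k * θ) • (S ∘L U θ) :=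
  diagonal_comp_shift_eq_smul (hU θ) hS fun m => by push_cast; rw [← Complex.exp_add]; ring_nf

lemma exp_two_mul_I_int_mul_add_pi (ℓ : ℤ) (θ : ℝ) :
    Complex.exp (Complex.I * (2 * ℓ : ℤ) * (θ + Real.pi : ℝ)) =
      Complex.exp (2 * Complex.I * ℓ * θ) := by
  have h := Complex.exp_int_mul_two_pi_mul_I ℓ
  rw [← mul_one (Complex.exp (2 * Complex.I * ℓ * θ)), ← h, ← Complex.exp_add]
  push_cast
  ring_nf

/-- **Weyl relation for the commutant pair.** With `V₁ := V²`, the pair `(U₁, V₁)`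
satisfies `U₁(θ) ∘ V₁^ℓ = exp(2iℓθ) • (V₁^ℓ ∘ U₁(θ))` for all `θ : ℝ`, `ℓ : ℤ`,
where `V₁ ^ ℓ` is the `ℤ`-power of the unitary `V₁`. -/
theorem U₁_V₁_weyl_commutation
    (U : ℝ → (H →L[ℂ] H)) (V : unitary (H →L[ℂ] H))
    (hU : ∀ (θ : ℝ) (ℓ : ℤ), U θ (e ℓ) = Complex.exp (Complex.I * ℓ * θ) • e ℓ)
    (hV : ∀ ℓ : ℤ, (V : H →L[ℂ] H) (e ℓ) = e (ℓ + 1)) :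
    ∀ (θ : ℝ) (ℓ : ℤ),
      U₁ U θ ∘L (((V ^ 2 : unitary (H →L[ℂ] H)) ^ ℓ : unitary (H →L[ℂ] H)) : H →L[ℂ] H) =
        Complex.exp (2 * Complex.I * ℓ * θ) •
          ((((V ^ 2 : unitary (H →L[ℂ] H)) ^ ℓ : unitary (H →L[ℂ] H)) : H →L[ℂ] H) ∘L U₁ U θ) := by
  intro θ ℓ
  have hW : ∀ m, (((V ^ 2 : unitary (H →L[ℂ] H)) ^ ℓ : unitary (H →L[ℂ] H)) : H →L[ℂ] H) (e m)
      = e (m + (2 * ℓ : ℤ)) := by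
    intro m
    rw [← zpow_apply_e_of_shift hV, zpow_mul, zpow_ofNat]
  have hUθ := diagonal_exp_comp_shift_eq_smul hU hW θ
  have hUθπ := diagonal_exp_comp_shift_eq_smul hU hW (θ + Real.pi)
  rw [exp_two_mul_I_int_mul_add_pi] at hUθπ
  rw [show Complex.I * ((2 * ℓ : ℤ) : ℂ) * θ = 2 * Complex.I * ℓ * θ by push_cast; ring] at hUθ
  simp only [U₁, ContinuousLinearMap.smul_comp, ContinuousLinearMap.add_comp,
    ContinuousLinearMap.comp_smul, ContinuousLinearMap.comp_add, hUθ, hUθπ]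
  module
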